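/- arXiv:1605.06976 — 7 statements merged into one kernel-verified Lean document; each statement's English description precedes it below -/
import Mathlib

section
/- Let d, N be positive integers, let G be a subgroup of the permutation group of Fin N, let B ⊆ G be a finite subset with nonnegative real weights w_π for π ∈ B, and suppose ρ_I : ℝ → Matrix is differentiable and satisfies dρ_I/dt = Σ_{π∈B} w_π (U_π ρ_I(t) U_π* − ρ_I(t)) for all t, where * denotes conjugate transpose. Then the symmetric average t ↦ (1/|G|) Σ_{σ∈G} U_σ ρ_I(t) U_σ* is constant in t; equivalently, its derivative is zero for all t. -/
open Matrix
open scoped Classical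

/-- The `d^N × d^N` permutation matrix associated with a permutation `π` of the `N` sites:
its `(f, g)` entry is `1` if `g = f ∘ π` and `0` otherwise. -/
noncomputable def permMatrix (d N : ℕ) (π : Equiv.Perm (Fin N)) :
    Matrix (Fin N → Fin d) (Fin N → Fin d) ℂ :=
  Matrix.of fun f g => if g = f ∘ π then 1 else 0

attribute [local instance] Matrix.frobeniusNormedAddCommGroup Matrix.frobeniusNormedSpace
attribute [local instance] Matrix.frobeniusNormedRing Matrix.frobeniusNormedAlgebra

/-!
Since `π ↦ U_π` is multiplicative and `*` reverses products, `U_σ (U_π ρ U_π*) U_σ* =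
U_{σπ} ρ U_{σπ}*`; for `π ∈ G` conjugating by `U_π` thus only reindexes the sum over `G` defining
the symmetric average. The average is therefore invariant under each such conjugation, and so it
kills every term `U_π ρ U_π* - ρ` of the generator. Since the average is linear, its derivative
is the average of `dρ_I/dt`, which is therefore zero.
-/

/-- The paper's symmetric average, up to the factor `1 / |G|`. -/
noncomputable def twirl {H R : Type*} [Group H] [AddCommMonoid R] [Mul R] [Star R]
    (U : H → R) (G : Subgroup H) [Fintype G] (X : R) : R :=
  ∑ σ : G, U σ * X * star (U σ)

section Twirl

variable {H R : Type*} [Group H] [Ring R] [StarMul R] (U : H →* R) (G : Subgroup H) [Fintype G]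

theorem twirl_conj {π : H} (hπ : π ∈ G) (X : R) :
    twirl U G (U π * X * star (U π)) = twirl U G X := by
  have hshift : ∀ σ : G, U σ * (U π * X * star (U π)) * star (U σ) =
      U ↑(σ * ⟨π, hπ⟩) * X * star (U ↑(σ * ⟨π, hπ⟩)) := fun σ => by
    simp only [Subgroup.coe_mul, map_mul, star_mul, mul_assoc]
  simp only [twirl, hshift]
  exact Equiv.sum_comp (Equiv.mulRight ⟨π, hπ⟩) fun σ : G => U σ * X * star (U σ)

theorem twirl_sum_smul_conj_sub {S : Type*} [Monoid S] [DistribMulAction S R]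
    [IsScalarTower S R R] [SMulCommClass S R R] {B : Finset H} (hB : ∀ π ∈ B, π ∈ G)
    (w : H → S) (X : R) :
    twirl U G (∑ π ∈ B, w π • (U π * X * star (U π) - X)) = 0 := by
  simp only [twirl, Finset.mul_sum, Finset.sum_mul, mul_smul_comm, smul_mul_assoc, mul_sub,
    sub_mul]
  rw [Finset.sum_comm]
  refine Finset.sum_eq_zero fun π hπ => ?_
  rw [← Finset.smul_sum, Finset.sum_sub_distrib]
  exact smul_eq_zero_of_right _ (sub_eq_zero.2 (twirl_conj U G (hB π hπ) X))

end Twirl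

theorem HasDerivAt.twirl {H R 𝕜 : Type*} [Group H] [NontriviallyNormedField 𝕜] [NormedRing R]
    [NormedAlgebra 𝕜 R] [StarMul R] (U : H →* R) (G : Subgroup H) [Fintype G]
    {ρ : 𝕜 → R} {ρ' : R} {t : 𝕜} (hρ : HasDerivAt ρ ρ' t) :
    HasDerivAt (fun s => twirl U G (ρ s)) (twirl U G ρ') t :=
  HasDerivAt.fun_sum fun _ _ => (hρ.const_mul _).mul_const _

theorem permMatrix_mul (d N : ℕ) (σ π : Equiv.Perm (Fin N)) :
    permMatrix d N (σ * π) = permMatrix d N σ * permMatrix d N π := by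
  ext f h
  rw [permMatrix, of_apply, mul_apply, Finset.sum_eq_single (f ∘ σ)]
  · simp [permMatrix, Function.comp_assoc]
    congr
  · intro g _ hg
    simp [permMatrix, hg]
  · simp

theorem permMatrix_one (d N : ℕ) : permMatrix d N 1 = 1 := by
  ext f g
  simp [permMatrix, one_apply, eq_comm]

@[simps]
noncomputable def permMatrixHom (d N : ℕ) :
    Equiv.Perm (Fin N) →* Matrix (Fin N → Fin d) (Fin N → Fin d) ℂ where
  toFun := permMatrix d N
  map_one' := permMatrix_one d N
  map_mul' := permMatrix_mul d N

theorem symmetric_average_conserved_general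
    (d N : ℕ)
    (G : Subgroup (Equiv.Perm (Fin N)))
    (B : Finset (Equiv.Perm (Fin N))) (hB : ∀ π ∈ B, π ∈ G)
    (w : Equiv.Perm (Fin N) → ℝ)
    (ρI : ℝ → Matrix (Fin N → Fin d) (Fin N → Fin d) ℂ)
    (hρI : ∀ t : ℝ, HasDerivAt ρI
      (∑ π ∈ B, w π • (permMatrix d N π * ρI t * (permMatrix d N π)ᴴ - ρI t)) t) :
    ∀ t : ℝ, HasDerivAt
      (fun s : ℝ => ((Nat.card G : ℂ))⁻¹ •
        ∑ σ : G, permMatrix d N (σ : Equiv.Perm (Fin N)) * ρI s *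
          (permMatrix d N (σ : Equiv.Perm (Fin N)))ᴴ)
      0 t := by
  intro t
  have h := ((hρI t).twirl (permMatrixHom d N) G).const_smul ((Nat.card G : ℂ)⁻¹)
  have hzero := twirl_sum_smul_conj_sub (permMatrixHom d N) G hB w (ρI t)
  simp only [permMatrixHom_apply, star_eq_conjTranspose] at hzero
  rw [hzero, smul_zero] at h
  exact h

/-- If `ρ_I` evolves by `dρ_I/dt = Σ_{π ∈ B} w_π (U_π ρ_I U_π† - ρ_I)` with `B ⊆ G` and
nonnegative weights, then the symmetric average `(1/|G|) Σ_{σ ∈ G} U_σ ρ_I(t) U_σ†` is a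
conserved quantity: its time derivative vanishes for all `t`. -/
theorem symmetric_average_conserved
    (d N : ℕ) (hd : 0 < d) (hN : 0 < N)
    (G : Subgroup (Equiv.Perm (Fin N)))
    (B : Finset (Equiv.Perm (Fin N))) (hB : ∀ π ∈ B, π ∈ G)
    (w : Equiv.Perm (Fin N) → ℝ) (hw : ∀ π ∈ B, 0 ≤ w π)
    (ρI : ℝ → Matrix (Fin N → Fin d) (Fin N → Fin d) ℂ)
    (hρI : ∀ t : ℝ, HasDerivAt ρI
      (∑ π ∈ B, w π • (permMatrix d N π * ρI t * (permMatrix d N π)ᴴ - ρI t)) t) :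
    ∀ t : ℝ, HasDerivAt
      (fun s : ℝ => ((Nat.card G : ℂ))⁻¹ •
        ∑ σ : G, permMatrix d N (σ : Equiv.Perm (Fin N)) * ρI s *
          (permMatrix d N (σ : Equiv.Perm (Fin N)))ᴴ)
      0 t :=
  symmetric_average_conserved_general d N G B hB w ρI hρI
end

section
/- Let w123, w12 be strictly positive real numbers and let L_U be the 3×3 matrix [[w123 + w12, −w12, −w123], [−w123 − w12, w123 + w12, 0], [0, −w123, w123]] regarded as a complex matrix. Set A₁ = (3/2)·w123 + w12 and B₁ = 4·w12² − 3·w123². Then every nonzero complex eigenvalue μ of L_U satisfies Re(μ) ≥ A₁ − (1/2)·Real.sqrt(max(B₁, 0)); that is, the convergence rate to the synchronous state over the directed graph G₁(3) is λ_Synch = A₁ − (1/2)·√(max(B₁,0)). -/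
open Matrix

/-!
The characteristic polynomial of `L_U` is `μ (μ² - 2 A₁ μ + C)` with `C = 3 w123² + 3 w123 w12`,
and `A₁² - C = B₁ / 4`. A nonzero eigenvalue is a root of the quadratic factor, so it is either
real with `|μ - A₁| = √B₁ / 2`, or non-real with `Re μ = A₁`.
-/

theorem Complex.sub_sqrt_le_re_of_sq_sub_two_mul_add_eq_zero {a c : ℝ} {z : ℂ}
    (hz : z ^ 2 - 2 * a * z + c = 0) : a - √(max (a ^ 2 - c) 0) ≤ z.re := by
  have hre : (z.re - a) ^ 2 = a ^ 2 - c + z.im ^ 2 := by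
    have := congrArg Complex.re hz
    simp only [sq, Complex.add_re, Complex.sub_re, Complex.mul_re, Complex.mul_im,
      Complex.ofReal_re, Complex.ofReal_im, Complex.re_ofNat, Complex.im_ofNat,
      Complex.zero_re] at this
    linarith
  have him : (z.re - a) * z.im = 0 := by
    have := congrArg Complex.im hz
    simp only [sq, Complex.add_im, Complex.sub_im, Complex.mul_im, Complex.mul_re,
      Complex.ofReal_re, Complex.ofReal_im, Complex.re_ofNat, Complex.im_ofNat,
      Complex.zero_im] at this
    linarith
  have hsq : (z.re - a) ^ 2 ≤ max (a ^ 2 - c) 0 := by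
    rcases mul_eq_zero.mp him with h | h
    · rw [h]; simp
    · rw [hre, h]; simp
  linarith [neg_abs_le (z.re - a), Real.abs_le_sqrt hsq]

def laplacianG₁₃ (w123 w12 : ℝ) : Matrix (Fin 3) (Fin 3) ℂ :=
  !![(w123 + w12 : ℂ), -w12, -w123;
     -w123 - w12, w123 + w12, 0;
     0, -w123, w123]

theorem eval_charpoly_laplacianG₁₃ (w123 w12 : ℝ) (μ : ℂ) :
    (laplacianG₁₃ w123 w12).charpoly.eval μ =
      μ * (μ ^ 2 - 2 * ((3 / 2 * w123 + w12 : ℝ) : ℂ) * μ +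
        ((3 * w123 ^ 2 + 3 * w123 * w12 : ℝ) : ℂ)) := by
  rw [eval_charpoly, det_fin_three]
  simp [laplacianG₁₃]
  ring

theorem synch_rate_G1_3_general (w123 w12 : ℝ) :
    ∀ μ ∈ spectrum ℂ
      (!![(w123 + w12 : ℂ), -w12, -w123;
          -w123 - w12, w123 + w12, 0;
          0, -w123, w123] : Matrix (Fin 3) (Fin 3) ℂ),
      μ ≠ 0 →
        (3 / 2 * w123 + w12) - 1 / 2 * Real.sqrt (max (4 * w12 ^ 2 - 3 * w123 ^ 2) 0) ≤
          μ.re := by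
  intro μ hμ hμ0
  have hroot : (laplacianG₁₃ w123 w12).charpoly.eval μ = 0 :=
    mem_spectrum_iff_isRoot_charpoly.mp hμ
  rw [eval_charpoly_laplacianG₁₃] at hroot
  have hμre := Complex.sub_sqrt_le_re_of_sq_sub_two_mul_add_eq_zero
    ((mul_eq_zero.mp hroot).resolve_left hμ0)
  have hdisc : (3 / 2 * w123 + w12) ^ 2 - (3 * w123 ^ 2 + 3 * w123 * w12) =
      (4 * w12 ^ 2 - 3 * w123 ^ 2) / 4 := by ring
  have hsqrt4 : √(4 : ℝ) = 2 := by
    rw [show (4 : ℝ) = 2 ^ 2 by norm_num, Real.sqrt_sq zero_le_two]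
  rw [hdisc, ← zero_div 4, max_div_div_right zero_le_four, Real.sqrt_div' _ zero_le_four,
    hsqrt4] at hμre
  linarith

/-- Every nonzero complex eigenvalue of the weighted Laplacian of the directed graph `G₁(3)`
(one directed 3-cycle with weight `w123 > 0` and one transposition edge with weight `w12 > 0`)
has real part at least `A₁ − √(max B₁ 0) / 2`, where `A₁ = (3/2) w123 + w12` and
`B₁ = 4 w12² − 3 w123²`; i.e. the convergence rate to the synchronous state is
`λ_Synch = A₁ − √(max B₁ 0) / 2`. -/
theorem synch_rate_G1_3 (w123 w12 : ℝ) (h123 : 0 < w123) (h12 : 0 < w12) :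
    ∀ μ ∈ spectrum ℂ
      (!![(w123 + w12 : ℂ), -w12, -w123;
          -w123 - w12, w123 + w12, 0;
          0, -w123, w123] : Matrix (Fin 3) (Fin 3) ℂ),
      μ ≠ 0 →
        (3 / 2 * w123 + w12) - 1 / 2 * Real.sqrt (max (4 * w12 ^ 2 - 3 * w123 ^ 2) 0) ≤
          μ.re :=
  synch_rate_G1_3_general w123 w12
end

section
/- Let w123, w12 be nonnegative real numbers. Let L_U be the 3×3 complex matrix [[w123 + w12, −w12, −w123], [−w123 − w12, w123 + w12, 0], [0, −w123, w123]], and with d₁ = w12 + w123 let L₆ be the 6×6 complex matrix with rows [d₁, 0, −w123, −w12, 0, 0], [−w123, d₁, 0, 0, 0, −w12], [0, −w123, d₁, 0, −w12, 0], [−w12, 0, 0, d₁, 0, −w123], [0, 0, −w12, −w123, d₁, 0], [0, −w12, 0, 0, −w123, d₁]. Then every complex eigenvalue of L_U is also an eigenvalue of L₆ (the spectrum of L_U is contained in the spectrum of L₆). -/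
/-!
If `S` is injective and `L₆ S = S L_U`, then `S` carries every eigenvector of `L_U` to an
eigenvector of `L₆` for the same eigenvalue. Here `S` pulls functions on the three vertices of
the underlying graph back along the surjective vertex map `![0, 1, 2, 1, 2, 0]` from the six
vertices of the induced graph, and the intertwining relation is a direct computation.
-/

open Matrix

namespace Matrix

variable {R m n : Type*} [Fintype n] [DecidableEq n]

theorem one_submatrix_mulVec [NonAssocSemiring R] (f : m → n) (v : n → R) :
    (1 : Matrix n n R).submatrix f id *ᵥ v = v ∘ f := by
  ext i
  simp [mulVec, dotProduct, one_apply]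

theorem mulVec_one_submatrix_injective [NonAssocSemiring R] {f : m → n}
    (hf : Function.Surjective f) :
    Function.Injective ((1 : Matrix n n R).submatrix f id).mulVec := by
  rw [show ((1 : Matrix n n R).submatrix f id).mulVec = (· ∘ f) from
    funext (one_submatrix_mulVec f)]
  exact hf.injective_comp_right

theorem spectrum_subset_of_mul_eq_mul {K : Type*} [Field K] [Fintype m] [DecidableEq m]
    {A : Matrix m m K} {B : Matrix n n K} {S : Matrix m n K}
    (hS : Function.Injective S.mulVec) (h : A * S = S * B) : spectrum K B ⊆ spectrum K A := by
  intro μ hμ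
  rw [← spectrum_toLin', ← Module.End.hasEigenvalue_iff_mem_spectrum] at hμ ⊢
  obtain ⟨v, hv_mem, hv_ne⟩ := hμ.exists_hasEigenvector
  rw [Module.End.mem_eigenspace_iff, toLin'_apply] at hv_mem
  refine Module.End.hasEigenvalue_of_hasEigenvector (x := S *ᵥ v) ⟨?_, ?_⟩
  · rw [Module.End.mem_eigenspace_iff, toLin'_apply, mulVec_mulVec, h, ← mulVec_mulVec, hv_mem,
      mulVec_smul]
  · simpa only [mulVec_zero] using hS.ne hv_ne

end Matrix

theorem spectrum_inclusion_G1_3_general (w123 w12 : ℝ) :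
    spectrum ℂ
      (!![(w123 + w12 : ℂ), -w12, -w123;
          -w123 - w12, w123 + w12, 0;
          0, -w123, w123] : Matrix (Fin 3) (Fin 3) ℂ) ⊆
    spectrum ℂ
      (!![(w12 + w123 : ℂ), 0, -w123, -w12, 0, 0;
          -w123, w12 + w123, 0, 0, 0, -w12;
          0, -w123, w12 + w123, 0, -w12, 0;
          -w12, 0, 0, w12 + w123, 0, -w123;
          0, 0, -w12, -w123, w12 + w123, 0;
          0, -w12, 0, 0, -w123, w12 + w123] : Matrix (Fin 6) (Fin 6) ℂ) := by
  let f : Fin 6 → Fin 3 := ![0, 1, 2, 1, 2, 0]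
  have hf : Function.Surjective f := by decide
  refine spectrum_subset_of_mul_eq_mul (S := (1 : Matrix (Fin 3) (Fin 3) ℂ).submatrix f id)
    (mulVec_one_submatrix_injective hf) ?_
  ext i j
  rw [mul_apply, mul_apply]
  fin_cases i <;> fin_cases j <;> simp [f, Fin.sum_univ_succ, one_apply] <;> ring

/-- Intertwining relation for `G₁(3)`: every complex eigenvalue of the Laplacian `L_U` of the
underlying graph (one directed 3-cycle with weight `w123 ≥ 0` and one transposition with
weight `w12 ≥ 0`) is also an eigenvalue of the Laplacian `L₆` of the six-vertex induced
graph. -/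
theorem spectrum_inclusion_G1_3 (w123 w12 : ℝ) (h123 : 0 ≤ w123) (h12 : 0 ≤ w12) :
    spectrum ℂ
      (!![(w123 + w12 : ℂ), -w12, -w123;
          -w123 - w12, w123 + w12, 0;
          0, -w123, w123] : Matrix (Fin 3) (Fin 3) ℂ) ⊆
    spectrum ℂ
      (!![(w12 + w123 : ℂ), 0, -w123, -w12, 0, 0;
          -w123, w12 + w123, 0, 0, 0, -w12;
          0, -w123, w12 + w123, 0, -w12, 0;
          -w12, 0, 0, w12 + w123, 0, -w123;
          0, 0, -w12, -w123, w12 + w123, 0;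
          0, -w12, 0, 0, -w123, w12 + w123] : Matrix (Fin 6) (Fin 6) ℂ) :=
  spectrum_inclusion_G1_3_general w123 w12
end

section
/- For nonnegative reals w123, w12, define λ_Synch(w123, w12) = (3/2)·w123 + w12 − (1/2)·Real.sqrt(max(4·w12² − 3·w123², 0)) and λ_Cons(w123, w12) = min(2·w12, λ_Synch(w123, w12)). If 3·w123 + 2·w12 ≤ 1, then λ_Cons(w123, w12) ≤ 2/5. Moreover λ_Cons(1/5, 1/5) = 2/5, so the optimal convergence rate to the consensus state over the topology G₁(3) under the weight budget 3·w123 + 2·w12 ≤ 1 equals 2/5 and is attained at w123 = w12 = 1/5. -/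
/-!
If `w12 ≤ 1/5` then `λ_Cons ≤ 2 w12 ≤ 2/5`. Otherwise the budget forces `w123 < 1/5 < w12`, so the
discriminant `4 w12² − 3 w123²` is at least `w12²`; hence `λ_Synch ≤ (3 w123 + w12) / 2
≤ (1 − w12) / 2 < 2/5`. On the diagonal the discriminant is exactly `w²`, giving `λ_Cons w w = 2 w`.
-/

/-- The convergence rate to the synchronous state over `G₁(3)`:
`λ_Synch = (3/2) w123 + w12 − (1/2) √(max (4 w12² − 3 w123²) 0)`. -/
noncomputable def lambdaSynch (w123 w12 : ℝ) : ℝ :=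
  3 / 2 * w123 + w12 - 1 / 2 * Real.sqrt (max (4 * w12 ^ 2 - 3 * w123 ^ 2) 0)

/-- The convergence rate to the consensus state over `G₁(3)`:
`λ_Cons = min (2 w12) λ_Synch`. -/
noncomputable def lambdaCons (w123 w12 : ℝ) : ℝ :=
  min (2 * w12) (lambdaSynch w123 w12)

lemma le_sqrt_max_discriminant {w123 w12 : ℝ} (h : |w123| ≤ w12) :
    w12 ≤ Real.sqrt (max (4 * w12 ^ 2 - 3 * w123 ^ 2) 0) := by
  have hw12 : 0 ≤ w12 := (abs_nonneg _).trans h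
  have hsq : w123 ^ 2 ≤ w12 ^ 2 := sq_le_sq' (abs_le.mp h).1 (abs_le.mp h).2
  calc w12 = Real.sqrt (w12 ^ 2) := (Real.sqrt_sq hw12).symm
    _ ≤ _ := Real.sqrt_le_sqrt (le_max_of_le_left (by linarith))

lemma lambdaSynch_le_of_abs_le {w123 w12 : ℝ} (h : |w123| ≤ w12) :
    lambdaSynch w123 w12 ≤ (3 * w123 + w12) / 2 := by
  have := le_sqrt_max_discriminant h
  unfold lambdaSynch
  linarith

lemma lambdaSynch_self {w : ℝ} (hw : 0 ≤ w) : lambdaSynch w w = 2 * w := by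
  have hdisc : max (4 * w ^ 2 - 3 * w ^ 2) 0 = w ^ 2 := by
    rw [max_eq_left] <;> nlinarith
  rw [lambdaSynch, hdisc, Real.sqrt_sq hw]
  ring

lemma lambdaCons_self {w : ℝ} (hw : 0 ≤ w) : lambdaCons w w = 2 * w := by
  rw [lambdaCons, lambdaSynch_self hw, min_self]

lemma lambdaCons_le_two_fifths {w123 w12 : ℝ} (hw123 : 0 ≤ w123)
    (hbudget : 3 * w123 + 2 * w12 ≤ 1) : lambdaCons w123 w12 ≤ 2 / 5 := by
  rcases le_or_gt w12 (1 / 5) with hsmall | hlarge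
  · exact (min_le_left _ _).trans (by linarith)
  · have habs : |w123| ≤ w12 := by rw [abs_of_nonneg hw123]; linarith
    have := lambdaSynch_le_of_abs_le habs
    exact (min_le_right _ _).trans (by linarith)

/-- Under the weight budget `3 w123 + 2 w12 ≤ 1`, the convergence rate to the consensus state
over the topology `G₁(3)` is at most `2/5`, and the value `2/5` is attained at
`w123 = w12 = 1/5`; hence the optimal consensus convergence rate is `2/5`. -/
theorem optimal_consensus_rate_G1_3 :
    (∀ w123 w12 : ℝ, 0 ≤ w123 → 0 ≤ w12 → 3 * w123 + 2 * w12 ≤ 1 →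
        lambdaCons w123 w12 ≤ 2 / 5) ∧
      lambdaCons (1 / 5) (1 / 5) = 2 / 5 := by
  refine ⟨fun _ _ hw123 _ hbudget => lambdaCons_le_two_fifths hw123 hbudget, ?_⟩
  rw [lambdaCons_self (by norm_num)]
  norm_num
end

section
/- (Failure of the Aldous property for G₂(3).) Let w, w12 be strictly positive reals with 3·w > 2·w12. Let L₃ be the 3×3 matrix [[2·w + w12, −w − w12, −w], [−w − w12, 2·w + w12, −w], [−w, −w, 2·w]] and, with d₂ = 2·w + w12, let L₆ be the 6×6 matrix with rows [d₂, −w, −w, −w12, 0, 0], [−w, d₂, −w, 0, 0, −w12], [−w, −w, d₂, 0, −w12, 0], [−w12, 0, 0, d₂, −w, −w], [0, 0, −w12, −w, d₂, −w], [0, −w12, 0, −w, −w, d₂]. Then 2·w12 is an eigenvalue of L₆, and every nonzero eigenvalue of L₃ is strictly greater than 2·w12; consequently the second smallest eigenvalue of L₆ is strictly less than the second smallest eigenvalue of L₃ (so the convergence rate to the consensus state, λ_Cons = 2·w12, is strictly smaller than the convergence rate to the synchronous state, λ_Synch = 3·w). -/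
/-!
The characteristic polynomial of `L₃` factors as `μ (μ - 3w) (μ - 3w - 2w₁₂)`, so every nonzero
eigenvalue of `L₃` is at least `3w`. In `L₆` the vertices split into two triangles joined by a
perfect matching of `w₁₂`-edges; the vector that is `1` on one triangle and `-1` on the other
is killed by the triangle part of `L₆` and doubled by each matching edge, so it is an
eigenvector with eigenvalue `2w₁₂`. Hence `λ₂(L₆) ≤ 2w₁₂ < 3w = λ₂(L₃)`.
-/

open Matrix

namespace Matrix

variable {n K : Type*} [Fintype n] [DecidableEq n] [Field K]

theorem mem_spectrum_iff_det_scalar_sub_eq_zero (A : Matrix n n K) (μ : K) :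
    μ ∈ spectrum K A ↔ (scalar n μ - A).det = 0 := by
  rw [mem_spectrum_iff_isRoot_charpoly, Polynomial.IsRoot.def, eval_charpoly]

theorem mem_spectrum_of_mulVec_eq_smul {A : Matrix n n K} {v : n → K} {μ : K} (hv : v ≠ 0)
    (hAv : A *ᵥ v = μ • v) : μ ∈ spectrum K A := by
  rw [← spectrum_toLin']
  exact Module.End.HasEigenvalue.mem_spectrum
    (Module.End.hasEigenvalue_of_hasEigenvector ⟨Module.End.mem_eigenspace_iff.mpr hAv, hv⟩)

end Matrix

def underlyingLaplacian (w w12 : ℝ) : Matrix (Fin 3) (Fin 3) ℝ :=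
  !![2 * w + w12, -w - w12, -w;
     -w - w12, 2 * w + w12, -w;
     -w, -w, 2 * w]

def inducedLaplacian (w w12 : ℝ) : Matrix (Fin 6) (Fin 6) ℝ :=
  !![2 * w + w12, -w, -w, -w12, 0, 0;
     -w, 2 * w + w12, -w, 0, 0, -w12;
     -w, -w, 2 * w + w12, 0, -w12, 0;
     -w12, 0, 0, 2 * w + w12, -w, -w;
     0, 0, -w12, -w, 2 * w + w12, -w;
     0, -w12, 0, -w, -w, 2 * w + w12]

theorem det_scalar_sub_underlyingLaplacian (w w12 μ : ℝ) :
    (scalar (Fin 3) μ - underlyingLaplacian w w12).det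
      = μ * (μ - 3 * w) * (μ - (3 * w + 2 * w12)) := by
  rw [det_fin_three]
  simp only [underlyingLaplacian, scalar_apply, Matrix.sub_apply, diagonal_apply_eq,
    diagonal_apply_ne, of_apply, cons_val', cons_val_zero, cons_val_fin_one, cons_val_one,
    cons_val, ne_eq, Fin.reduceEq, not_false_eq_true, Fin.isValue]
  ring

theorem spectrum_underlyingLaplacian (w w12 : ℝ) :
    spectrum ℝ (underlyingLaplacian w w12) = {0, 3 * w, 3 * w + 2 * w12} := by
  ext μ
  simp only [mem_spectrum_iff_det_scalar_sub_eq_zero, det_scalar_sub_underlyingLaplacian,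
    mul_eq_zero, sub_eq_zero, Set.mem_insert_iff, Set.mem_singleton_iff, or_assoc]

theorem inducedLaplacian_mulVec (w w12 : ℝ) :
    inducedLaplacian w w12 *ᵥ ![1, 1, 1, -1, -1, -1] = (2 * w12) • ![1, 1, 1, -1, -1, -1] := by
  ext i
  fin_cases i <;>
    simp only [inducedLaplacian, mulVec, dotProduct, Fin.sum_univ_succ, of_apply, cons_val',
      cons_val_zero, cons_val_succ, cons_val_one, cons_val, cons_val_fin_one, Finset.univ_unique,
      Finset.sum_singleton, Fin.default_eq_zero, Pi.smul_apply, smul_eq_mul, Fin.isValue,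
      Fin.zero_eta, Fin.mk_one, Fin.reduceFinMk] <;>
    ring

theorem two_mul_mem_spectrum_inducedLaplacian (w w12 : ℝ) :
    2 * w12 ∈ spectrum ℝ (inducedLaplacian w w12) :=
  mem_spectrum_of_mulVec_eq_smul (fun h => by simpa using congrFun h 0)
    (inducedLaplacian_mulVec w w12)

theorem aldous_fails_G2_3_general (w w12 : ℝ) (hw12 : 0 < w12) (h : 2 * w12 < 3 * w)
    (L₃ : Matrix (Fin 3) (Fin 3) ℝ) (L₆ : Matrix (Fin 6) (Fin 6) ℝ)
    (hL₃ : L₃ = !![2 * w + w12, -w - w12, -w;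
                   -w - w12, 2 * w + w12, -w;
                   -w, -w, 2 * w])
    (hL₆ : L₆ = !![2 * w + w12, -w, -w, -w12, 0, 0;
                   -w, 2 * w + w12, -w, 0, 0, -w12;
                   -w, -w, 2 * w + w12, 0, -w12, 0;
                   -w12, 0, 0, 2 * w + w12, -w, -w;
                   0, 0, -w12, -w, 2 * w + w12, -w;
                   0, -w12, 0, -w, -w, 2 * w + w12]) :
    2 * w12 ∈ spectrum ℝ L₆ ∧
      (∀ μ ∈ spectrum ℝ L₃, μ ≠ 0 → 2 * w12 < μ) ∧
      sInf {μ | μ ∈ spectrum ℝ L₆ ∧ μ ≠ 0} < sInf {μ | μ ∈ spectrum ℝ L₃ ∧ μ ≠ 0} := by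
  have hspec₃ : spectrum ℝ L₃ = {0, 3 * w, 3 * w + 2 * w12} :=
    hL₃ ▸ spectrum_underlyingLaplacian w w12
  have hCons : 2 * w12 ∈ spectrum ℝ L₆ := hL₆ ▸ two_mul_mem_spectrum_inducedLaplacian w w12
  have hSynch : 3 * w ∈ spectrum ℝ L₃ := by simp [hspec₃]
  have hSynch_le : ∀ μ ∈ spectrum ℝ L₃, μ ≠ 0 → 3 * w ≤ μ := by
    rw [hspec₃]
    rintro μ (rfl | rfl | rfl) hμ
    exacts [absurd rfl hμ, le_rfl, by linarith]
  refine ⟨hCons, fun μ hμ hμ0 => h.trans_le (hSynch_le μ hμ hμ0), ?_⟩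
  calc sInf {μ | μ ∈ spectrum ℝ L₆ ∧ μ ≠ 0}
      ≤ 2 * w12 := csInf_le ((finite_spectrum L₆).subset fun _ hμ => hμ.1).bddBelow
        ⟨hCons, by positivity⟩
    _ < 3 * w := h
    _ ≤ sInf {μ | μ ∈ spectrum ℝ L₃ ∧ μ ≠ 0} :=
        le_csInf ⟨3 * w, hSynch, by linarith⟩ fun μ hμ => hSynch_le μ hμ.1 hμ.2

/-- Failure of the Aldous property for `G₂(3)` with `w123 = w321 = w` and `3w > 2 w12`:
`2 w12` is an eigenvalue of the induced-graph Laplacian `L₆`, every nonzero eigenvalue of the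
underlying Laplacian `L₃` is strictly greater than `2 w12`, and consequently the smallest
nonzero eigenvalue of `L₆` (the second smallest eigenvalue, i.e. `λ_Cons = 2 w12`) is strictly
smaller than the smallest nonzero eigenvalue of `L₃` (i.e. `λ_Synch = 3 w`). -/
theorem aldous_fails_G2_3 (w w12 : ℝ) (hw : 0 < w) (hw12 : 0 < w12) (h : 2 * w12 < 3 * w)
    (L₃ : Matrix (Fin 3) (Fin 3) ℝ) (L₆ : Matrix (Fin 6) (Fin 6) ℝ)
    (hL₃ : L₃ = !![2 * w + w12, -w - w12, -w;
                   -w - w12, 2 * w + w12, -w;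
                   -w, -w, 2 * w])
    (hL₆ : L₆ = !![2 * w + w12, -w, -w, -w12, 0, 0;
                   -w, 2 * w + w12, -w, 0, 0, -w12;
                   -w, -w, 2 * w + w12, 0, -w12, 0;
                   -w12, 0, 0, 2 * w + w12, -w, -w;
                   0, 0, -w12, -w, 2 * w + w12, -w;
                   0, -w12, 0, -w, -w, 2 * w + w12]) :
    2 * w12 ∈ spectrum ℝ L₆ ∧
      (∀ μ ∈ spectrum ℝ L₃, μ ≠ 0 → 2 * w12 < μ) ∧
      sInf {μ | μ ∈ spectrum ℝ L₆ ∧ μ ≠ 0} < sInf {μ | μ ∈ spectrum ℝ L₃ ∧ μ ≠ 0} :=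
  aldous_fails_G2_3_general w w12 hw12 h L₃ L₆ hL₃ hL₆
end

section
/- (Global optimum for the path topology G₃(3).) Let w12, w23 be nonnegative real numbers with 2·w12 + 2·w23 ≤ 1. Then (w12 + w23) − Real.sqrt(w12² − w12·w23 + w23²) ≤ 1/4, with equality if and only if w12 = w23 = 1/4. In particular, under the weight budget 2·w12 + 2·w23 ≤ 1, the maximal second smallest eigenvalue of the weighted Laplacian of the path graph on three vertices equals 1/4 and is attained exactly at w12 = w23 = 1/4. -/
/-! The identity `a² - ab + b² = ((a + b)/2)² + (3/4)(a - b)²` gives `√(a² - ab + b²) ≥ (a + b)/2`,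
so the eigenvalue is at most `(w12 + w23)/2 ≤ 1/4`. Equality forces both the budget to be tight and
the square `(w12 - w23)²` to vanish. -/

lemma sq_sub_mul_add_sq_eq (a b : ℝ) :
    a ^ 2 - a * b + b ^ 2 = ((a + b) / 2) ^ 2 + 3 / 4 * (a - b) ^ 2 := by
  ring

lemma add_div_two_le_sqrt_sq_sub_mul_add_sq (a b : ℝ) :
    (a + b) / 2 ≤ Real.sqrt (a ^ 2 - a * b + b ^ 2) := by
  refine (le_abs_self _).trans (Real.abs_le_sqrt ?_)
  rw [sq_sub_mul_add_sq_eq]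
  nlinarith [sq_nonneg (a - b)]

lemma eq_of_sqrt_sq_sub_mul_add_sq_eq {a b : ℝ}
    (h : Real.sqrt (a ^ 2 - a * b + b ^ 2) = (a + b) / 2) : a = b := by
  have hnonneg : 0 ≤ (a + b) / 2 := h ▸ Real.sqrt_nonneg _
  have hsq : a ^ 2 - a * b + b ^ 2 = ((a + b) / 2) ^ 2 :=
    (Real.sqrt_eq_iff_eq_sq (by nlinarith [sq_nonneg (a - b)]) hnonneg).mp h
  rw [sq_sub_mul_add_sq_eq] at hsq
  nlinarith [sq_nonneg (a - b)]

theorem optimal_path3_general (w12 w23 : ℝ)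
    (hbudget : 2 * w12 + 2 * w23 ≤ 1) :
    (w12 + w23) - Real.sqrt (w12 ^ 2 - w12 * w23 + w23 ^ 2) ≤ 1 / 4 ∧
      ((w12 + w23) - Real.sqrt (w12 ^ 2 - w12 * w23 + w23 ^ 2) = 1 / 4 ↔
        w12 = 1 / 4 ∧ w23 = 1 / 4) := by
  have hle := add_div_two_le_sqrt_sq_sub_mul_add_sq w12 w23
  refine ⟨by linarith, fun heq => ?_, ?_⟩
  · have hsqrt : Real.sqrt (w12 ^ 2 - w12 * w23 + w23 ^ 2) = (w12 + w23) / 2 := by linarith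
    have hw := eq_of_sqrt_sq_sub_mul_add_sq_eq hsqrt
    constructor <;> linarith
  · rintro ⟨rfl, rfl⟩
    rw [show (1 / 4 : ℝ) ^ 2 - 1 / 4 * (1 / 4) + (1 / 4) ^ 2 = (1 / 4) ^ 2 by norm_num,
      Real.sqrt_sq (by norm_num)]
    norm_num

/-- Global optimum for the path topology `G₃(3)`: for nonnegative weights with budget
`2 w12 + 2 w23 ≤ 1`, the second smallest Laplacian eigenvalue
`(w12 + w23) − √(w12² − w12 w23 + w23²)` is at most `1/4`, with equality iff
`w12 = w23 = 1/4`. -/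
theorem optimal_path3 (w12 w23 : ℝ) (h12 : 0 ≤ w12) (h23 : 0 ≤ w23)
    (hbudget : 2 * w12 + 2 * w23 ≤ 1) :
    (w12 + w23) - Real.sqrt (w12 ^ 2 - w12 * w23 + w23 ^ 2) ≤ 1 / 4 ∧
      ((w12 + w23) - Real.sqrt (w12 ^ 2 - w12 * w23 + w23 ^ 2) = 1 / 4 ↔
        w12 = 1 / 4 ∧ w23 = 1 / 4) :=
  optimal_path3_general w12 w23 hbudget
end

section
/- Let w123, w12 be strictly positive reals with 3·w123 + 2·w12 = 1, and let L_U be the 3×3 complex matrix [[w123 + w12, −w12, −w123], [−w123 − w12, w123 + w12, 0], [0, −w123, w123]]. Then both nonzero complex eigenvalues of L_U have real part equal to 1/2 if and only if 4·w12² ≤ 3·w123²; otherwise (i.e. when 4·w12² > 3·w123²) both nonzero eigenvalues are real and the smaller one is strictly less than 1/2. Consequently, under the budget 3·w123 + 2·w12 = 1, the convergence rate to the synchronous state over G₁(3) equals its maximal value 1/2 exactly when 4·w12² ≤ 3·w123². -/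
/-!
The characteristic polynomial of `L` factors as `μ ((μ - A)² - B / 4)` with
`A = (3/2) w123 + w12` and `B = 4 w12² - 3 w123²`, and the budget makes `A = 1/2`. So the nonzero
eigenvalues are `1/2 ± √(B/4)`: complex conjugates with real part `1/2` when `B ≤ 0`, real when
`B > 0`. In the latter case the smaller one, `1/2 - √(B/4)`, is still nonzero because
`1/4 - B/4 = 3 w123 (w123 + w12) > 0`.
-/

open Matrix

namespace Complex

theorem im_eq_zero_of_sq_eq_ofReal_of_nonneg {z : ℂ} {r : ℝ} (hz : z ^ 2 = r) (hr : 0 ≤ r) :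
    z.im = 0 := by
  have hre : z.re ^ 2 - z.im ^ 2 = r := by simpa [sq] using congrArg re hz
  have him : z.re * z.im = 0 := by simpa [sq, two_mul, mul_comm] using congrArg im hz
  rcases mul_eq_zero.mp him with hre0 | him0
  · rw [hre0] at hre
    nlinarith
  · exact him0

theorem re_eq_zero_of_sq_eq_ofReal_of_nonpos {z : ℂ} {r : ℝ} (hz : z ^ 2 = r) (hr : r ≤ 0) :
    z.re = 0 := by
  have hIz : (I * z) ^ 2 = ((-r : ℝ) : ℂ) := by
    rw [mul_pow, I_sq, hz, ofReal_neg, neg_one_mul]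
  simpa using im_eq_zero_of_sq_eq_ofReal_of_nonneg hIz (neg_nonneg.mpr hr)

end Complex

def laplacianG1_3 (w123 w12 : ℝ) : Matrix (Fin 3) (Fin 3) ℂ :=
  !![(w123 + w12 : ℂ), -w12, -w123;
     -w123 - w12, w123 + w12, 0;
     0, -w123, w123]

theorem eval_charpoly_laplacianG1_3 (w123 w12 : ℝ) (μ : ℂ) :
    (laplacianG1_3 w123 w12).charpoly.eval μ =
      μ * ((μ - (3 / 2 * w123 + w12 : ℝ)) ^ 2 - (w12 ^ 2 - 3 / 4 * w123 ^ 2 : ℝ)) := by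
  rw [eval_charpoly, laplacianG1_3, det_fin_three]
  simp only [scalar_apply, Matrix.sub_apply, diagonal_apply_eq, diagonal_apply_ne, of_apply,
    cons_val', cons_val_zero, cons_val_one, cons_val_fin_one, cons_val, ne_eq, Fin.reduceEq,
    not_false_eq_true]
  push_cast
  ring

theorem mem_spectrum_laplacianG1_3_iff (w123 w12 : ℝ) (μ : ℂ) :
    μ ∈ spectrum ℂ (laplacianG1_3 w123 w12) ↔
      μ = 0 ∨ (μ - (3 / 2 * w123 + w12 : ℝ)) ^ 2 = (w12 ^ 2 - 3 / 4 * w123 ^ 2 : ℝ) := by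
  rw [mem_spectrum_iff_isRoot_charpoly, Polynomial.IsRoot, eval_charpoly_laplacianG1_3,
    mul_eq_zero, sub_eq_zero]

theorem mem_spectrum_laplacianG1_3_iff_of_budget {w123 w12 : ℝ}
    (hbudget : 3 * w123 + 2 * w12 = 1) (μ : ℂ) :
    μ ∈ spectrum ℂ (laplacianG1_3 w123 w12) ↔
      μ = 0 ∨ (μ - 1 / 2) ^ 2 = (w12 ^ 2 - 3 / 4 * w123 ^ 2 : ℝ) := by
  have hA : ((3 / 2 * w123 + w12 : ℝ) : ℂ) = 1 / 2 := by
    rw [show 3 / 2 * w123 + w12 = 1 / 2 by linarith]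
    norm_num
  rw [← hA]
  exact mem_spectrum_laplacianG1_3_iff w123 w12 μ

theorem exists_mem_spectrum_laplacianG1_3_re_lt_half {w123 w12 : ℝ} (h123 : 0 < w123)
    (h12 : 0 < w12) (hbudget : 3 * w123 + 2 * w12 = 1) (hB : 3 * w123 ^ 2 < 4 * w12 ^ 2) :
    ∃ μ ∈ spectrum ℂ (laplacianG1_3 w123 w12), μ ≠ 0 ∧ μ.re < 1 / 2 := by
  set d := w12 ^ 2 - 3 / 4 * w123 ^ 2 with hd
  have hd_pos : 0 < d := by linarith
  have hsqrt_lt : √d < 1 / 2 := by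
    have hgap : 1 / 4 - d = 3 * w123 * (w123 + w12) := by
      rw [hd]
      linear_combination -(3 * w123 + 2 * w12 + 1) / 4 * hbudget
    have hgap_pos : 0 < 3 * w123 * (w123 + w12) := by positivity
    rw [Real.sqrt_lt' one_half_pos]
    linarith
  refine ⟨((1 / 2 - √d : ℝ) : ℂ), (mem_spectrum_laplacianG1_3_iff_of_budget hbudget _).mpr
    (Or.inr ?_), ?_, ?_⟩
  · rw [← hd]
    push_cast
    rw [sub_sub_cancel_left, neg_sq, ← Complex.ofReal_pow, Real.sq_sqrt hd_pos.le]
  · exact_mod_cast (sub_pos.mpr hsqrt_lt).ne'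
  · simpa using Real.sqrt_pos.mpr hd_pos

/-- Under the budget `3 w123 + 2 w12 = 1`, both nonzero eigenvalues of the Laplacian of
`G₁(3)` have real part `1/2` (the maximal synchronisation rate) if and only if
`4 w12² ≤ 3 w123²`; otherwise all eigenvalues are real and some nonzero eigenvalue is
strictly less than `1/2`. -/
theorem max_synch_rate_G1_3 (w123 w12 : ℝ) (h123 : 0 < w123) (h12 : 0 < w12)
    (hbudget : 3 * w123 + 2 * w12 = 1)
    (L : Matrix (Fin 3) (Fin 3) ℂ)
    (hL : L = !![(w123 + w12 : ℂ), -w12, -w123;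
                 -w123 - w12, w123 + w12, 0;
                 0, -w123, w123]) :
    ((∀ μ ∈ spectrum ℂ L, μ ≠ 0 → μ.re = 1 / 2) ↔ 4 * w12 ^ 2 ≤ 3 * w123 ^ 2) ∧
      (3 * w123 ^ 2 < 4 * w12 ^ 2 →
        (∀ μ ∈ spectrum ℂ L, μ.im = 0) ∧
          ∃ μ ∈ spectrum ℂ L, μ ≠ 0 ∧ μ.re < 1 / 2) := by
  obtain rfl : L = laplacianG1_3 w123 w12 := hL
  have hspec := mem_spectrum_laplacianG1_3_iff_of_budget hbudget
  have slow_mode := exists_mem_spectrum_laplacianG1_3_re_lt_half h123 h12 hbudget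
  refine ⟨⟨fun hre => ?_, fun hB μ hμ hμ0 => ?_⟩, fun hB => ⟨fun μ hμ => ?_, slow_mode hB⟩⟩
  · by_contra! hB
    obtain ⟨μ, hμ, hμ0, hμre⟩ := slow_mode hB
    exact hμre.ne (hre μ hμ hμ0)
  · have hsq := ((hspec μ).mp hμ).resolve_left hμ0
    simpa [sub_eq_zero] using Complex.re_eq_zero_of_sq_eq_ofReal_of_nonpos hsq (by linarith)
  · rcases (hspec μ).mp hμ with rfl | hsq
    · rfl
    · simpa using Complex.im_eq_zero_of_sq_eq_ofReal_of_nonneg hsq (by linarith)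
end
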